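/- The permutation 4321 is not contained in the increasing staircase St(Inc, Av(321)); equivalently, every permutation in St(Inc, Av(321)) avoids 4321. -/

import Mathlib

/-- `τ` contains the pattern `σ`. -/
def Contains {n k : ℕ} (τ : Fin n → Fin n) (σ : Fin k → Fin k) : Prop :=
  ∃ f : Fin k → Fin n, StrictMono f ∧ ∀ a b : Fin k, σ a < σ b ↔ τ (f a) < τ (f b)

/-- Membership of `π` in the increasing staircase `St(Inc, Av(σ))`: for some `k`,
`π` has a gridding by a `k × (k+1)` matrix whose diagonal cells `(i,i)` are
increasing and whose cells `(i,i+1)` avoid `σ`, all other cells being empty. -/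
def InStaircase {q n : ℕ} (σ : Fin q → Fin q) (π : Fin n → Fin n) : Prop :=
  ∃ k : ℕ, 0 < k ∧ ∃ c r : ℕ → ℕ, Monotone c ∧ Monotone r ∧
    c 0 = 0 ∧ c k = n ∧ r 0 = 0 ∧ r (k + 1) = n ∧
    (∀ x : Fin n, ∃ i < k, (c i ≤ (x : ℕ) ∧ (x : ℕ) < c (i + 1)) ∧
      ((r i ≤ (π x : ℕ) ∧ (π x : ℕ) < r (i + 1)) ∨
       (r (i + 1) ≤ (π x : ℕ) ∧ (π x : ℕ) < r (i + 2)))) ∧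
    (∀ i < k, ∀ x y : Fin n, x < y →
      (c i ≤ (x : ℕ) ∧ (x : ℕ) < c (i + 1) ∧ r i ≤ (π x : ℕ) ∧ (π x : ℕ) < r (i + 1)) →
      (c i ≤ (y : ℕ) ∧ (y : ℕ) < c (i + 1) ∧ r i ≤ (π y : ℕ) ∧ (π y : ℕ) < r (i + 1)) →
      π x < π y) ∧
    (∀ i < k, ¬ ∃ f : Fin q → Fin n, StrictMono f ∧
      (∀ a, c i ≤ (f a : ℕ) ∧ (f a : ℕ) < c (i + 1) ∧
        r (i + 1) ≤ (π (f a) : ℕ) ∧ (π (f a) : ℕ) < r (i + 2)) ∧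
      (∀ a b, σ a < σ b ↔ π (f a) < π (f b)))

/-!
Assign every point of `π` the cell `(col, row)` of the gridding that contains it. Columns increase
from left to right, rows from bottom to top, and every point lies on the diagonal (`row = col`) or
just above it (`row = col + 1`). For an inversion `x < y`, `π y < π x`, this gives
`col x ≤ col y ≤ row y ≤ row x ≤ col x + 1`; as diagonal cells are increasing, `x` cannot be on the
diagonal. So in a decreasing sequence of length `m + 1` the first `m` points all lie above the
diagonal, and the chain of inequalities puts them in one and the same cell, which therefore
contains the decreasing pattern of length `m`.
-/

theorem strictAnti_iff_forall_rev_lt_rev_iff {α : Type*} [Preorder α] {k : ℕ} {v : Fin k → α} :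
    StrictAnti v ↔ ∀ a b : Fin k, Fin.rev a < Fin.rev b ↔ v a < v b := by
  refine ⟨fun hv a b => ?_, fun h a b hab => (h b a).mp (Fin.rev_lt_rev.mpr hab)⟩
  rw [Fin.rev_lt_rev, hv.lt_iff_gt]

/-- Point `x` of `π` lies in column `col x` and row `row x` of a staircase gridding. -/
structure StaircaseCells {q n : ℕ} (σ : Fin q → Fin q) (π : Fin n → Fin n) where
  col : Fin n → ℕ
  row : Fin n → ℕ
  col_mono : Monotone col
  row_mono : ∀ x y, π x ≤ π y → row x ≤ row y
  col_le_row : ∀ x, col x ≤ row x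
  row_le_col_succ : ∀ x, row x ≤ col x + 1
  diag_increasing : ∀ i x y, x < y → col x = i → row x = i → col y = i → row y = i → π x < π y
  upper_avoids : ∀ i, ¬ ∃ f : Fin q → Fin n, StrictMono f ∧
    (∀ a, col (f a) = i ∧ row (f a) = i + 1) ∧ ∀ a b, σ a < σ b ↔ π (f a) < π (f b)

theorem InStaircase.nonempty_staircaseCells {q n : ℕ} {σ : Fin q → Fin q} {π : Fin n → Fin n}
    (h : InStaircase σ π) : Nonempty (StaircaseCells σ π) := by
  obtain ⟨k, hk, c, r, hc, hr, -, -, -, -, hcell, hdiag, havoid⟩ := h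
  have hcell' : ∀ x : Fin n, ∃ i < k, ∃ j, i ≤ j ∧ j ≤ i + 1 ∧
      (c i ≤ (x : ℕ) ∧ (x : ℕ) < c (i + 1)) ∧ (r j ≤ (π x : ℕ) ∧ (π x : ℕ) < r (j + 1)) := by
    intro x
    obtain ⟨i, hik, hx, hπx | hπx⟩ := hcell x
    · exact ⟨i, hik, i, le_rfl, by omega, hx, hπx⟩
    · exact ⟨i, hik, i + 1, by omega, le_rfl, hx, hπx⟩
  choose col hcol_lt row hcol_le hrow_le hx hπx using hcell'
  refine ⟨⟨col, row, ?_, ?_, hcol_le, hrow_le, ?_, ?_⟩⟩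
  · exact fun x y hxy => Nat.lt_succ_iff.mp <|
      hc.reflect_lt (((hx x).1.trans (Fin.mk_le_mk.mp hxy)).trans_lt (hx y).2)
  · exact fun x y hxy => Nat.lt_succ_iff.mp <|
      hr.reflect_lt (((hπx x).1.trans (Fin.mk_le_mk.mp hxy)).trans_lt (hπx y).2)
  · rintro i x y hxy rfl hrx hcy hry
    have hxc := hx x
    have hxr := hπx x
    have hyc := hx y
    have hyr := hπx y
    rw [hrx] at hxr
    rw [hcy] at hyc
    rw [hry] at hyr
    exact hdiag _ (hcol_lt x) x y hxy ⟨hxc.1, hxc.2, hxr⟩ ⟨hyc.1, hyc.2, hyr⟩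
  · rintro i ⟨f, hf, hcellf, hpat⟩
    rcases isEmpty_or_nonempty (Fin q) with hq | ⟨⟨a₀⟩⟩
    · -- with no points the cell index `i` is unconstrained, but the empty pattern occurs in cell `0`
      exact havoid 0 hk ⟨f, hf, isEmptyElim, isEmptyElim⟩
    refine havoid i ((hcellf a₀).1 ▸ hcol_lt (f a₀)) ⟨f, hf, fun a => ?_, hpat⟩
    have hac := hx (f a)
    have har := hπx (f a)
    rw [(hcellf a).1] at hac
    rw [(hcellf a).2] at har
    exact ⟨hac.1, hac.2, har⟩

namespace StaircaseCells

variable {q n : ℕ} {σ : Fin q → Fin q} {π : Fin n → Fin n} (G : StaircaseCells σ π)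

theorem row_eq_col_succ_of_inversion {x y : Fin n} (hxy : x < y) (hπ : π y < π x) :
    G.row x = G.col x + 1 := by
  have := G.col_mono hxy.le
  have := G.row_mono y x hπ.le
  have := G.col_le_row x
  have := G.col_le_row y
  have := G.row_le_col_succ x
  by_contra hx
  exact hπ.not_gt (G.diag_increasing (G.col x) x y hxy rfl (by omega) (by omega) (by omega))

theorem col_eq_of_upper_of_le {x y : Fin n} (hxy : x ≤ y) (hπ : π y ≤ π x)
    (hx : G.row x = G.col x + 1) (hy : G.row y = G.col y + 1) : G.col y = G.col x := by
  have := G.col_mono hxy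
  have := G.row_mono y x hπ
  omega

theorem not_contains_rev_succ {m : ℕ} (G : StaircaseCells (Fin.rev : Fin m → Fin m) π) :
    ¬ Contains π (Fin.rev : Fin (m + 1) → Fin (m + 1)) := by
  rintro ⟨f, hf, hpat⟩
  have hπf : StrictAnti (π ∘ f) := strictAnti_iff_forall_rev_lt_rev_iff.mpr hpat
  have upper (a : Fin m) : G.row (f a.castSucc) = G.col (f a.castSucc) + 1 :=
    G.row_eq_col_succ_of_inversion (hf (Fin.castSucc_lt_last a)) (hπf (Fin.castSucc_lt_last a))
  refine G.upper_avoids (G.col (f 0)) ⟨fun a => f a.castSucc, hf.comp Fin.strictMono_castSucc,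
    fun a => ?_, strictAnti_iff_forall_rev_lt_rev_iff.mp (hπf.comp_strictMono Fin.strictMono_castSucc)⟩
  have hcol : G.col (f a.castSucc) = G.col (f 0) :=
    G.col_eq_of_upper_of_le (hf.monotone (Fin.zero_le _)) (hπf.antitone (Fin.zero_le _))
      (upper ⟨0, a.pos⟩) (upper a)
  exact ⟨hcol, by rw [upper a, hcol]⟩

end StaircaseCells

theorem InStaircase.not_contains_rev_succ {m n : ℕ} {π : Fin n → Fin n}
    (h : InStaircase (Fin.rev : Fin m → Fin m) π) :
    ¬ Contains π (Fin.rev : Fin (m + 1) → Fin (m + 1)) :=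
  h.nonempty_staircaseCells.some.not_contains_rev_succ

theorem staircase_avoids_4321_general {n : ℕ} (π : Fin n → Fin n)
    (hgrid : InStaircase (![2, 1, 0] : Fin 3 → Fin 3) π) :
    ¬ Contains π (![3, 2, 1, 0] : Fin 4 → Fin 4) := by
  have h321 : (![2, 1, 0] : Fin 3 → Fin 3) = Fin.rev := by decide
  have h4321 : (![3, 2, 1, 0] : Fin 4 → Fin 4) = Fin.rev := by decide
  rw [h321] at hgrid
  rw [h4321]
  exact hgrid.not_contains_rev_succ

/-- Every permutation in `St(Inc, Av(321))` avoids `4321`. -/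
theorem staircase_avoids_4321 {n : ℕ} (π : Fin n → Fin n)
    (hπ : Function.Bijective π)
    (hgrid : InStaircase (![2, 1, 0] : Fin 3 → Fin 3) π) :
    ¬ Contains π (![3, 2, 1, 0] : Fin 4 → Fin 4) :=
  staircase_avoids_4321_general π hgrid
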